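/- arXiv:2412.05314 — 6 statements merged into one kernel-verified Lean document; each statement's English description precedes it below -/
import Mathlib

section
/- For constants h > 0 and 0 < θ < 1, the function φ(x,y,t) = (16/(h(θ-2)²(x²+y²)))^(1/(θ-2)) satisfies φ_t - 2φ_x² - 2φφ_xx - 2φ_y² - 2φφ_yy + hφ^θ = 0 at all points with x²+y² > 0. -/
noncomputable def px (f : ℝ → ℝ → ℝ → ℝ) : ℝ → ℝ → ℝ → ℝ :=
  fun x y t => deriv (fun u => f u y t) x

noncomputable def py (f : ℝ → ℝ → ℝ → ℝ) : ℝ → ℝ → ℝ → ℝ :=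
  fun x y t => deriv (fun u => f x u t) y

noncomputable def pt (f : ℝ → ℝ → ℝ → ℝ) : ℝ → ℝ → ℝ → ℝ :=
  fun x y t => deriv (fun u => f x y u) t

/-!
Writing `r = x² + y²`, `γ = 1/(2-θ)` and `K = (h(θ-2)²/16)^γ`, the function is the
time-independent radial power `φ = K r^γ`. For any radial power `f = K r^γ` one computes
`f_x² + f f_xx + f_y² + f f_yy = 8γ²K² r^(2γ-1)`, while `h φ^θ = h K^θ r^(γθ)` with
`γθ = 2γ - 1`. The equation therefore reduces to `h K^θ = 16γ²K²`, which holds because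
`K^(2-θ) = h(θ-2)²/16 = h/(16γ²)`.
-/

open Topology

noncomputable def radialPow (K g : ℝ) : ℝ → ℝ → ℝ → ℝ :=
  fun x y _ => K * (x ^ 2 + y ^ 2) ^ g

theorem radialPow_swap (K g x y t : ℝ) : radialPow K g x y t = radialPow K g y x t := by
  simp only [radialPow, add_comm]

section Swap

variable {f : ℝ → ℝ → ℝ → ℝ} (hf : ∀ x y t, f x y t = f y x t)
include hf

theorem py_eq_px_swap (x y t : ℝ) : py f x y t = px f y x t := by
  show deriv (fun u => f x u t) y = deriv (fun u => f u x t) y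
  simp only [hf x]

theorem py_py_eq_px_px_swap (x y t : ℝ) : py (py f) x y t = px (px f) y x t := by
  show deriv (fun u => py f x u t) y = deriv (fun u => px f u x t) y
  simp only [py_eq_px_swap hf]

end Swap

theorem hasDerivAt_sq_add_rpow {c g x : ℝ} (hx : x ^ 2 + c ≠ 0) :
    HasDerivAt (fun u => (u ^ 2 + c) ^ g) (2 * g * x * (x ^ 2 + c) ^ (g - 1)) x := by
  convert ((hasDerivAt_pow 2 x).add_const c).rpow_const (p := g) (Or.inl hx) using 1
  push_cast
  ring

theorem hasDerivAt_mul_sq_add_rpow {c g x : ℝ} (hx : x ^ 2 + c ≠ 0) :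
    HasDerivAt (fun u => u * (u ^ 2 + c) ^ g)
      ((x ^ 2 + c) ^ g + 2 * g * x ^ 2 * (x ^ 2 + c) ^ (g - 1)) x :=
  ((hasDerivAt_id' x).mul (hasDerivAt_sq_add_rpow hx)).congr_deriv (by ring)

namespace radialPow

theorem pt_eq_zero (K g x y t : ℝ) : pt (radialPow K g) x y t = 0 :=
  deriv_const _ _

variable {K g x y : ℝ}

theorem px_eq (hxy : x ^ 2 + y ^ 2 ≠ 0) (t : ℝ) :
    px (radialPow K g) x y t = 2 * g * K * x * (x ^ 2 + y ^ 2) ^ (g - 1) := by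
  show deriv (fun u => K * (u ^ 2 + y ^ 2) ^ g) x = _
  rw [((hasDerivAt_sq_add_rpow hxy).const_mul K).deriv]
  ring

theorem px_px_eq (hxy : x ^ 2 + y ^ 2 ≠ 0) (t : ℝ) :
    px (px (radialPow K g)) x y t =
      2 * g * K *
        ((x ^ 2 + y ^ 2) ^ (g - 1) + 2 * (g - 1) * x ^ 2 * (x ^ 2 + y ^ 2) ^ (g - 2)) := by
  have hpx : (fun u => px (radialPow K g) u y t) =ᶠ[𝓝 x]
      fun u => 2 * g * K * (u * (u ^ 2 + y ^ 2) ^ (g - 1)) := by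
    have hopen : IsOpen {u : ℝ | u ^ 2 + y ^ 2 ≠ 0} :=
      isOpen_ne_fun (by fun_prop) continuous_const
    filter_upwards [hopen.mem_nhds hxy] with u hu
    rw [px_eq hu]
    ring
  show deriv (fun u => px (radialPow K g) u y t) x = _
  rw [hpx.deriv_eq, ((hasDerivAt_mul_sq_add_rpow hxy).const_mul _).deriv,
    show g - 1 - 1 = g - 2 by ring]

theorem porous_sum_eq (hxy : 0 < x ^ 2 + y ^ 2) (t : ℝ) :
    px (radialPow K g) x y t ^ 2 + radialPow K g x y t * px (px (radialPow K g)) x y t +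
      py (radialPow K g) x y t ^ 2 + radialPow K g x y t * py (py (radialPow K g)) x y t =
      8 * g ^ 2 * K ^ 2 * (x ^ 2 + y ^ 2) ^ (2 * g - 1) := by
  have hyx : y ^ 2 + x ^ 2 ≠ 0 := by rw [add_comm]; exact hxy.ne'
  rw [py_eq_px_swap (radialPow_swap K g), py_py_eq_px_px_swap (radialPow_swap K g),
    px_eq hxy.ne', px_px_eq hxy.ne', px_eq hyx, px_px_eq hyx, radialPow, add_comm (y ^ 2)]
  set r := x ^ 2 + y ^ 2
  have hr : r ≠ 0 := hxy.ne'
  have hg : r ^ g = r ^ (g - 2) * r ^ 2 := by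
    rw [← Real.rpow_add_natCast hr]; norm_num
  have hg1 : r ^ (g - 1) = r ^ (g - 2) * r := by
    rw [show g - 1 = g - 2 + 1 by ring, Real.rpow_add_one hr]
  have h2g : r ^ (2 * g - 1) = r ^ (g - 2) * r ^ (g - 2) * r ^ 3 := by
    rw [← Real.rpow_add hxy, ← Real.rpow_add_natCast hr]
    congr 1
    push_cast
    ring
  rw [hg, hg1, h2g]
  ring

end radialPow

theorem div_rpow_neg_eq_radialPow {c p : ℝ} (hc : 0 ≤ c) :
    (fun x y (_ : ℝ) => (c / (x ^ 2 + y ^ 2)) ^ (-p)) = radialPow (c⁻¹ ^ p) p := by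
  funext x y t
  rw [Real.rpow_neg_eq_inv_rpow, inv_div, div_eq_inv_mul,
    Real.mul_rpow (inv_nonneg.2 hc) (by positivity), radialPow]

/-- For h > 0 and 0 < θ < 1, φ(x,y,t) = (16/(h(θ-2)²(x²+y²)))^(1/(θ-2)) satisfies
    φ_t - 2φ_x² - 2φφ_xx - 2φ_y² - 2φφ_yy + hφ^θ = 0 wherever x²+y² > 0. -/
theorem stmt_1 (h θ : ℝ) (hh : 0 < h) (hθ : 0 < θ ∧ θ < 1)
    (φ : ℝ → ℝ → ℝ → ℝ)
    (hφ : φ = fun x y _t =>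
      (16 / (h * (θ - 2) ^ 2 * (x ^ 2 + y ^ 2))) ^ (1 / (θ - 2)) )
    (x y t : ℝ) (hxy : 0 < x ^ 2 + y ^ 2) :
    pt φ x y t - 2 * (px φ x y t) ^ 2 - 2 * φ x y t * px (px φ) x y t -
      2 * (py φ x y t) ^ 2 - 2 * φ x y t * py (py φ) x y t +
      h * (φ x y t) ^ θ = 0 := by
  have hθ2 : 2 - θ ≠ 0 := by linarith [hθ.2]
  set c := 16 / (h * (θ - 2) ^ 2)
  have hc : 0 ≤ c := by positivity
  set g := (2 - θ)⁻¹
  set K := c⁻¹ ^ g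
  have hK : 0 ≤ K := by positivity
  have hφK : φ = radialPow K g := by
    rw [hφ, ← div_rpow_neg_eq_radialPow hc]
    simp only [c, div_mul_eq_div_div, g, neg_inv, neg_sub, one_div]
  have hgθ : g * θ = 2 * g - 1 := by
    simp only [g]; field_simp; ring
  have hKθ : h * K ^ θ = 16 * g ^ 2 * K ^ 2 := by
    have hK2θ : K ^ (2 - θ) = c⁻¹ := Real.rpow_inv_rpow (inv_nonneg.2 hc) hθ2
    have hK2 : K ^ 2 = K ^ (2 - θ) * K ^ θ := by
      rw [← Real.rpow_add' hK (by simp), sub_add_cancel, Real.rpow_two]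
    rw [hK2, hK2θ]
    simp only [c, g]
    field_simp
    ring
  have hφθ : radialPow K g x y t ^ θ = K ^ θ * (x ^ 2 + y ^ 2) ^ (2 * g - 1) := by
    rw [radialPow, Real.mul_rpow hK (by positivity), ← Real.rpow_mul hxy.le, hgθ]
  subst hφK
  rw [radialPow.pt_eq_zero, hφθ]
  linear_combination (-2) * radialPow.porous_sum_eq (K := K) (g := g) hxy t +
    (x ^ 2 + y ^ 2) ^ (2 * g - 1) * hKθ
end

section
/- For h > 0 and θ ∈ (0,1), the function G(λ) = (16/(hλ(θ-2)²))^(1/(θ-2)) satisfies the ODE -hG^θ + 8λ(G')² + 8G(G' + λG'') = 0 for all λ > 0. -/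
/-!
On `λ > 0`, `G` is the power law `A λ ^ p` with `p = 1 / (2 - θ)` and `A ^ (θ - 2) = 16 / (h (θ - 2)²)`.
Since `p θ = 2p - 1`, every term of the equation is a multiple of `λ ^ (2p - 1)`, and the
coefficients `-h A ^ θ` and `8 A² (p² + p + p (p - 1)) = 16 A² p²` cancel by the choice of `A`.
-/

open Real Set

lemma div_rpow_eq_rpow_mul_rpow_neg {b x : ℝ} (hb : 0 ≤ b) (hx : 0 < x) (q : ℝ) :
    (b / x) ^ q = b ^ q * x ^ (-q) := by
  rw [div_rpow hb hx.le, rpow_neg hx.le, div_eq_mul_inv]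

lemma deriv_eq_of_eqOn_Ioi_const_mul_rpow {G : ℝ → ℝ} {A p x : ℝ}
    (hG : EqOn G (fun y => A * y ^ p) (Ioi 0)) (hx : 0 < x) :
    deriv G x = A * p * x ^ (p - 1) := by
  rw [(hG.eventuallyEq_of_mem (Ioi_mem_nhds hx)).deriv_eq, deriv_const_mul_field,
    Real.deriv_rpow_const, mul_assoc]

lemma deriv_deriv_eq_of_eqOn_Ioi_const_mul_rpow {G : ℝ → ℝ} {A p x : ℝ}
    (hG : EqOn G (fun y => A * y ^ p) (Ioi 0)) (hx : 0 < x) :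
    deriv (deriv G) x = A * p * (p - 1) * x ^ (p - 1 - 1) :=
  deriv_eq_of_eqOn_Ioi_const_mul_rpow (fun _ hy => deriv_eq_of_eqOn_Ioi_const_mul_rpow hG hy) hx

lemma const_mul_rpow_ode {h θ A p x : ℝ} (hA : 0 < A) (hx : 0 < x) (hpθ : p * θ = 2 * p - 1)
    (hcoef : h * A ^ θ = 16 * A ^ 2 * p ^ 2) :
    -h * (A * x ^ p) ^ θ + 8 * x * (A * p * x ^ (p - 1)) ^ 2 +
      8 * (A * x ^ p) * (A * p * x ^ (p - 1) + x * (A * p * (p - 1) * x ^ (p - 1 - 1))) = 0 := by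
  have hpow : (A * x ^ p) ^ θ = A ^ θ * (x ^ p) ^ 2 / x := by
    rw [mul_rpow hA.le (rpow_nonneg hx.le p), ← rpow_mul hx.le, hpθ, rpow_sub_one hx.ne',
      mul_comm 2 p, rpow_mul hx.le, rpow_two, mul_div_assoc]
  rw [hpow, rpow_sub_one hx.ne', rpow_sub_one hx.ne', rpow_sub_one hx.ne']
  field_simp
  linear_combination (-(x ^ p) ^ 2) * hcoef

/-- For h > 0 and θ ∈ (0,1), G(λ) = (16/(hλ(θ-2)²))^(1/(θ-2)) satisfies
    -hG^θ + 8λ(G')² + 8G(G' + λG'') = 0 for all λ > 0. -/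
theorem stmt_3 (h θ : ℝ) (hh : 0 < h) (hθ : θ ∈ Set.Ioo (0 : ℝ) 1)
    (G : ℝ → ℝ) (hG : G = fun l => (16 / (h * l * (θ - 2) ^ 2)) ^ (1 / (θ - 2)))
    (l : ℝ) (hl : 0 < l) :
    -h * (G l) ^ θ + 8 * l * (deriv G l) ^ 2 +
      8 * G l * (deriv G l + l * deriv (deriv G) l) = 0 := by
  set q := θ - 2
  have hq : q ≠ 0 := by linarith [hθ.2]
  set B := 16 / (h * q ^ 2) with hBdef
  have hB : 0 < B := by positivity
  set A := B ^ q⁻¹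
  have hA : 0 < A := rpow_pos_of_pos hB _
  have hGA : EqOn G (fun x => A * x ^ (-q⁻¹)) (Ioi 0) := by
    intro x hx
    have hBx : 16 / (h * x * q ^ 2) = B / x := by rw [hBdef]; field_simp
    rw [hG]
    dsimp only
    rw [hBx, one_div, div_rpow_eq_rpow_mul_rpow_neg hB.le hx]
  have hcoef : h * A ^ θ = 16 * A ^ 2 * (-q⁻¹) ^ 2 := by
    rw [show θ = q + 2 by ring, rpow_add hA, rpow_inv_rpow hB.le hq, rpow_two, hBdef]
    field_simp
  rw [deriv_deriv_eq_of_eqOn_Ioi_const_mul_rpow hGA hl, deriv_eq_of_eqOn_Ioi_const_mul_rpow hGA hl,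
    hGA hl]
  exact const_mul_rpow_ode hA hl (by field_simp; ring) hcoef
end

section
/- The span of the five vector fields X₁ = γx∂_x + γy∂_y + t∂_t - (φ/(θ-1))∂_φ, X₂ = ∂_t, X₃ = y∂_x - x∂_y, X₄ = ∂_x, X₅ = ∂_y is closed under the Lie bracket, i.e., it forms a 5-dimensional Lie algebra. -/
noncomputable def vf (a : ℝ × ℝ × ℝ × ℝ → ℝ × ℝ × ℝ × ℝ)
    (f : ℝ × ℝ × ℝ × ℝ → ℝ) : ℝ × ℝ × ℝ × ℝ → ℝ :=
  fun p => fderiv ℝ f p (a p)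

noncomputable def lieOp (a b : ℝ × ℝ × ℝ × ℝ → ℝ × ℝ × ℝ × ℝ)
    (f : ℝ × ℝ × ℝ × ℝ → ℝ) : ℝ × ℝ × ℝ × ℝ → ℝ :=
  fun p => vf a (vf b f) p - vf b (vf a f) p

abbrev E4 := ℝ × ℝ × ℝ × ℝ

lemma lie_key {f : E4 → ℝ} (hf : ContDiff ℝ (⊤ : ℕ∞) f) {a b : E4 → E4}
    {a' b' : E4 →L[ℝ] E4} {p : E4}
    (ha : HasFDerivAt a a' p) (hb : HasFDerivAt b b' p) :
    lieOp a b f p = fderiv ℝ f p (b' (a p) - a' (b p)) := by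
  have hdf : ContDiff ℝ (⊤ : ℕ∞) (fderiv ℝ f) := hf.fderiv_right (by simp)
  set f'' := fderiv ℝ (fderiv ℝ f) p with hf''
  have hc : HasFDerivAt (fderiv ℝ f) f'' p :=
    ((hdf.differentiable (by simp)) p).hasFDerivAt
  have hsym : ∀ v w, f'' v w = f'' w v :=
    second_derivative_symmetric (fun y => ((hf.differentiable (by simp)) y).hasFDerivAt) hc
  have hB : fderiv ℝ (vf b f) p = (fderiv ℝ f p).comp b' + f''.flip (b p) :=
    (hc.clm_apply hb).fderiv
  have hA : fderiv ℝ (vf a f) p = (fderiv ℝ f p).comp a' + f''.flip (a p) :=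
    (hc.clm_apply ha).fderiv
  show fderiv ℝ (vf b f) p (a p) - fderiv ℝ (vf a f) p (b p) = _
  rw [hA, hB]
  simp only [ContinuousLinearMap.add_apply, ContinuousLinearMap.comp_apply,
    ContinuousLinearMap.flip_apply, map_sub]
  rw [hsym (a p) (b p)]
  ring

/-- The span of the five vector fields X₁,…,X₅ is closed under the Lie bracket:
    each bracket [Xᵢ, Xⱼ] acts on smooth functions as a linear combination of the Xₖ. -/
theorem stmt_6 (θ : ℝ) (hθ : θ ∈ Set.Ioo (0 : ℝ) 1)
    (γ : ℝ) (hγ : γ = (θ - 2) / (2 * (θ - 1)))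
    (A : Fin 5 → (ℝ × ℝ × ℝ × ℝ → ℝ × ℝ × ℝ × ℝ))
    (h₁ : A 0 = fun p => (γ * p.1, γ * p.2.1, p.2.2.1, -(p.2.2.2 / (θ - 1))))
    (h₂ : A 1 = fun _ => (0, 0, 1, 0))
    (h₃ : A 2 = fun p => (p.2.1, -p.1, 0, 0))
    (h₄ : A 3 = fun _ => (1, 0, 0, 0))
    (h₅ : A 4 = fun _ => (0, 1, 0, 0)) :
    ∃ c : Fin 5 → Fin 5 → Fin 5 → ℝ, ∀ i j : Fin 5,
      ∀ f : ℝ × ℝ × ℝ × ℝ → ℝ, ContDiff ℝ (⊤ : ℕ∞) f → ∀ p,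
        lieOp (A i) (A j) f p = ∑ k : Fin 5, c i j k * vf (A k) f p := by
  -- projections
  set π₁ : E4 →L[ℝ] ℝ := ContinuousLinearMap.fst ℝ ℝ (ℝ × ℝ × ℝ)
  set π₂ : E4 →L[ℝ] ℝ := (ContinuousLinearMap.fst ℝ ℝ (ℝ × ℝ)).comp (ContinuousLinearMap.snd ℝ ℝ (ℝ × ℝ × ℝ))
  set π₃ : E4 →L[ℝ] ℝ := ((ContinuousLinearMap.fst ℝ ℝ ℝ).comp (ContinuousLinearMap.snd ℝ ℝ (ℝ × ℝ))).comp (ContinuousLinearMap.snd ℝ ℝ (ℝ × ℝ × ℝ))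
  set π₄ : E4 →L[ℝ] ℝ := ((ContinuousLinearMap.snd ℝ ℝ ℝ).comp (ContinuousLinearMap.snd ℝ ℝ (ℝ × ℝ))).comp (ContinuousLinearMap.snd ℝ ℝ (ℝ × ℝ × ℝ))
  set L0 : E4 →L[ℝ] E4 :=
    (γ • π₁).prod ((γ • π₂).prod (π₃.prod ((-(θ - 1)⁻¹) • π₄))) with hL0
  set L2 : E4 →L[ℝ] E4 := π₂.prod (((-1 : ℝ) • π₁).prod ((0 : E4 →L[ℝ] ℝ).prod 0)) with hL2
  have hL0v : ∀ v : E4, L0 v = (γ * v.1, γ * v.2.1, v.2.2.1, -(v.2.2.2 / (θ - 1))) := by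
    intro v
    simp [hL0, π₁, π₂, π₃, π₄, smul_eq_mul, neg_div, div_eq_inv_mul, mul_comm]
  have hL2v : ∀ v : E4, L2 v = (v.2.1, -v.1, 0, 0) := by
    intro v; simp [hL2, π₁, π₂]
  have hd0 : ∀ p : E4, HasFDerivAt (A 0) L0 p := by
    intro p
    have : A 0 = fun v => L0 v := by rw [h₁]; funext v; rw [hL0v]
    rw [this]; exact L0.hasFDerivAt
  have hd2 : ∀ p : E4, HasFDerivAt (A 2) L2 p := by
    intro p
    have : A 2 = fun v => L2 v := by rw [h₃]; funext v; rw [hL2v]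
    rw [this]; exact L2.hasFDerivAt
  have hd1 : ∀ p : E4, HasFDerivAt (A 1) (0 : E4 →L[ℝ] E4) p := by
    intro p; rw [h₂]; exact hasFDerivAt_const _ _
  have hd3 : ∀ p : E4, HasFDerivAt (A 3) (0 : E4 →L[ℝ] E4) p := by
    intro p; rw [h₄]; exact hasFDerivAt_const _ _
  have hd5 : ∀ p : E4, HasFDerivAt (A 4) (0 : E4 →L[ℝ] E4) p := by
    intro p; rw [h₅]; exact hasFDerivAt_const _ _
  -- derivative assignment
  set D : Fin 5 → (E4 →L[ℝ] E4) := ![L0, 0, L2, 0, 0] with hD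
  have hd : ∀ i (p : E4), HasFDerivAt (A i) (D i) p := by
    intro i p
    fin_cases i
    · exact hd0 p
    · exact hd1 p
    · exact hd2 p
    · exact hd3 p
    · exact hd5 p
  have hθ1 : θ - 1 ≠ 0 := by
    have := hθ.2; intro h; nlinarith [hθ.1, hθ.2]
  refine ⟨fun i j k => ![![![0,0,0,0,0], ![0,-1,0,0,0], ![0,0,0,0,0], ![0,0,0,-γ,0], ![0,0,0,0,-γ]],
                         ![![0,1,0,0,0], ![0,0,0,0,0], ![0,0,0,0,0], ![0,0,0,0,0], ![0,0,0,0,0]],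
                         ![![0,0,0,0,0], ![0,0,0,0,0], ![0,0,0,0,0], ![0,0,0,0,1], ![0,0,0,-1,0]],
                         ![![0,0,0,γ,0], ![0,0,0,0,0], ![0,0,0,0,-1], ![0,0,0,0,0], ![0,0,0,0,0]],
                         ![![0,0,0,0,γ], ![0,0,0,0,0], ![0,0,0,1,0], ![0,0,0,0,0], ![0,0,0,0,0]]]
       i j k, ?_⟩
  intro i j f hf p
  rw [lie_key hf (hd i p) (hd j p)]
  have key : ∀ v : E4, ∀ w : Fin 5 → ℝ,
      v = ∑ k : Fin 5, w k • A k p →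
      fderiv ℝ f p v = ∑ k : Fin 5, w k * vf (A k) f p := by
    intro v w hv
    rw [hv, map_sum]
    refine Finset.sum_congr rfl fun k _ => ?_
    rw [map_smul]; rfl
  fin_cases i <;> fin_cases j <;>
    (apply key;
     simp only [hD, h₁, h₂, h₃, h₄, h₅, Matrix.cons_val_zero, Matrix.cons_val_one,
       Matrix.head_cons, Matrix.cons_val_two, Matrix.tail_cons, Matrix.cons_val_three,
       Matrix.cons_val_four, Fin.isValue, Fin.sum_univ_five,
       ContinuousLinearMap.zero_apply, hL0v, hL2v, Prod.smul_mk, smul_eq_mul,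
       Prod.mk_add_mk, Prod.mk_sub_mk, Fin.zero_eta, Fin.mk_one, Fin.reduceFinMk,
       sub_self, Prod.fst_zero, Prod.snd_zero];
     exact Prod.ext (by norm_num; try ring) (Prod.ext (by norm_num; try ring)
       (Prod.ext (by norm_num; try ring) (by norm_num; try ring))))
end

section
/- For the 5-dimensional Lie algebra L⁵ with nonzero brackets [X₁,X₂] = -X₂, [X₁,X₄] = -γX₄, [X₁,X₅] = -γX₅, [X₃,X₄] = X₅, [X₃,X₅] = -X₄, the Killing form of X = α₁X₁ + α₂X₂ + α₃X₃ + α₄X₄ + α₅X₅ with itself equals (2γ² + 1)α₁² - 2α₃². -/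
/-- Bracket of the 5-dimensional Lie algebra L⁵ in coordinates with respect to the
    basis X₁,…,X₅ (indices 0,…,4): the nonzero basis brackets are
    [X₁,X₂] = -X₂, [X₁,X₄] = -γX₄, [X₁,X₅] = -γX₅, [X₃,X₄] = X₅, [X₃,X₅] = -X₄. -/
def br (γ : ℝ) (a b : Fin 5 → ℝ) : Fin 5 → ℝ :=
  ![0,
    -(a 0 * b 1 - a 1 * b 0),
    0,
    -γ * (a 0 * b 3 - a 3 * b 0) - (a 2 * b 4 - a 4 * b 2),
    -γ * (a 0 * b 4 - a 4 * b 0) + (a 2 * b 3 - a 3 * b 2)]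

/-- Matrix of ad(X), ad(X)(Y) = [X,Y], in the basis X₁,…,X₅. -/
def adM (γ : ℝ) (a : Fin 5 → ℝ) : Matrix (Fin 5) (Fin 5) ℝ :=
  fun i j => br γ a (Pi.single j 1) i

/-- The Killing form K(X,X) = Tr(ad(X)∘ad(X)) of X = Σ αᵢXᵢ equals (2γ²+1)α₁² - 2α₃². -/
theorem stmt_7 (γ : ℝ) (hγ : γ ≠ 0) (α : Fin 5 → ℝ) :
    Matrix.trace (adM γ α * adM γ α) = (2 * γ ^ 2 + 1) * (α 0) ^ 2 - 2 * (α 2) ^ 2 := by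
  simp [Matrix.trace, Matrix.mul_apply, adM, br, Fin.sum_univ_five, Pi.single_apply]
  ring
end

section
/- For the Lie algebra L⁵, the coefficient α₃ of X₃ is invariant under the adjoint action Ad(exp(εXᵢ)) for all i = 1,...,5 and all ε ∈ ℝ. -/
/-- The adjoint action Ad(exp(εY)) = exp(-ε ad(Y)) on coordinates. -/
noncomputable def AdExp (γ ε : ℝ) (Y : Fin 5 → ℝ) : (Fin 5 → ℝ) → (Fin 5 → ℝ) :=
  fun a => Matrix.mulVec (NormedSpace.exp ((-ε) • adM γ Y)) a

/-! Every bracket of L⁵ lies in the span of X₂, X₄, X₅, so the X₃-row of ad(Y) vanishes for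
every Y. A matrix with a zero row `i` satisfies `Eᵢᵢ * M = 0 * Eᵢᵢ`, and this
semiconjugacy passes to the exponential series, giving `Eᵢᵢ * exp M = exp 0 * Eᵢᵢ = Eᵢᵢ`: row `i` of `exp M` is that of the identity. -/

open NormedSpace

namespace Matrix

variable {m 𝔸 : Type*} [Fintype m] [DecidableEq m] [NormedRing 𝔸] [NormedAlgebra ℚ 𝔸]
  [CompleteSpace 𝔸]

-- The L∞ operator norm induces the product uniformity, so completeness is inherited from `𝔸`.
open scoped Norms.Operator in
theorem semiconjBy_exp_right {X A B : Matrix m m 𝔸} (h : SemiconjBy X A B) :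
    SemiconjBy X (exp A) (exp B) :=
  @SemiconjBy.exp_right _ _ _ (inferInstanceAs (CompleteSpace (m → m → 𝔸))) _ _ _ h

theorem exp_row_eq_of_row_eq_zero {M : Matrix m m 𝔸} {i : m} (h : M i = 0) :
    exp M i = (1 : Matrix m m 𝔸) i := by
  have hE : SemiconjBy (single i i 1) M 0 := by
    ext k j
    rcases eq_or_ne k i with rfl | hk
    · simp [h]
    · simp [hk]
  ext j
  have := congr_fun₂ (semiconjBy_exp_right hE) i j
  simp only [exp_zero, one_mul, single_mul_apply_same] at this
  rw [this, single_apply, one_apply]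
  simp

theorem exp_mulVec_apply_of_row_eq_zero {M : Matrix m m 𝔸} {i : m} (h : M i = 0) (v : m → 𝔸) :
    (exp M *ᵥ v) i = v i := by
  rw [mulVec, exp_row_eq_of_row_eq_zero h, ← mulVec, one_mulVec]

end Matrix

theorem adM_row_two (γ : ℝ) (a : Fin 5 → ℝ) : adM γ a 2 = 0 := rfl

/-- The coefficient α₃ of X₃ is invariant under all adjoint actions Ad(exp(εXᵢ)). -/
theorem stmt_11 (γ : ℝ) (i : Fin 5) (ε : ℝ) (α : Fin 5 → ℝ) :
    AdExp γ ε (Pi.single i 1) α 2 = α 2 := by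
  refine Matrix.exp_mulVec_apply_of_row_eq_zero ?_ α
  show (-ε) • adM γ (Pi.single i 1) 2 = 0
  rw [adM_row_two, smul_zero]
end

section
/- For constants α₂ ≠ 0, α₄, α₅, d₁, d₂ with d₁² + d₂² ≠ 0, the affine function φ(x,y,t) = ((α₅d₁ - α₄d₂)/(2α₂(d₁² + d₂²)))·(d₂x - d₂α₄t/α₂ - d₁y + d₁α₅t/α₂) satisfies φ_t - 2φ_x² - 2φφ_xx - 2φ_y² - 2φφ_yy = 0. -/
/-!
Since the PDE has no explicit dependence on `x`, `y`, `t`, an affine function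
`a x + b y + c t + e` has vanishing second derivatives and turns the equation into the
algebraic condition `c = 2 (a² + b²)`. For the given φ one has `a = C d₂`, `b = -C d₁`,
`c = C (α₅d₁ - α₄d₂) / α₂` with `C = (α₅d₁ - α₄d₂) / (2α₂(d₁² + d₂²))`, and the condition
becomes `2 C² (d₁² + d₂²) = C (α₅d₁ - α₄d₂) / α₂`, which follows from the definition of `C`
(if `d₁² + d₂² = 0`, division by zero gives `C = 0` and both sides vanish).
-/

theorem px_affine (a b c e : ℝ) :
    px (fun x y t => a * x + b * y + c * t + e) = fun _ _ _ => a := by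
  funext x y t
  simp [px]

theorem py_affine (a b c e : ℝ) :
    py (fun x y t => a * x + b * y + c * t + e) = fun _ _ _ => b := by
  funext x y t
  simp [py]

theorem pt_affine (a b c e : ℝ) :
    pt (fun x y t => a * x + b * y + c * t + e) = fun _ _ _ => c := by
  funext x y t
  simp [pt]

theorem px_const (k : ℝ) : px (fun _ _ _ => k) = fun _ _ _ => 0 := by
  funext x y t
  simp [px]

theorem py_const (k : ℝ) : py (fun _ _ _ => k) = fun _ _ _ => 0 := by
  funext x y t
  simp [py]

theorem stmt_17_general (α₂ α₄ α₅ d₁ d₂ : ℝ)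
    (φ : ℝ → ℝ → ℝ → ℝ)
    (hφ : φ = fun x y t =>
      (α₅ * d₁ - α₄ * d₂) / (2 * α₂ * (d₁ ^ 2 + d₂ ^ 2)) *
        (d₂ * x - d₂ * α₄ * t / α₂ - d₁ * y + d₁ * α₅ * t / α₂))
    (x y t : ℝ) :
    pt φ x y t - 2 * (px φ x y t) ^ 2 - 2 * φ x y t * px (px φ) x y t -
      2 * (py φ x y t) ^ 2 - 2 * φ x y t * py (py φ) x y t = 0 := by
  set K := α₅ * d₁ - α₄ * d₂
  set C := K / (2 * α₂ * (d₁ ^ 2 + d₂ ^ 2)) with hC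
  have hφ_affine : φ = fun x y t => (C * d₂) * x + (-(C * d₁)) * y + (C * (K / α₂)) * t + 0 := by
    rw [hφ]; funext x y t; ring
  have hC_eq : 2 * C ^ 2 * (d₁ ^ 2 + d₂ ^ 2) = C * (K / α₂) := by
    rcases eq_or_ne (d₁ ^ 2 + d₂ ^ 2) 0 with hS | hS
    · simp [hC, hS]
    · rw [hC]; field_simp
  rw [hφ_affine, px_affine, py_affine, pt_affine, px_const, py_const]
  linear_combination -hC_eq

/-- The affine invariant solution
    φ(x,y,t) = ((α₅d₁ - α₄d₂)/(2α₂(d₁²+d₂²)))·(d₂x - d₂α₄t/α₂ - d₁y + d₁α₅t/α₂)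
    satisfies the h = 0 population PDE φ_t - 2φ_x² - 2φφ_xx - 2φ_y² - 2φφ_yy = 0. -/
theorem stmt_17 (α₂ α₄ α₅ d₁ d₂ : ℝ) (hα₂ : α₂ ≠ 0) (hd : d₁ ^ 2 + d₂ ^ 2 ≠ 0)
    (φ : ℝ → ℝ → ℝ → ℝ)
    (hφ : φ = fun x y t =>
      (α₅ * d₁ - α₄ * d₂) / (2 * α₂ * (d₁ ^ 2 + d₂ ^ 2)) *
        (d₂ * x - d₂ * α₄ * t / α₂ - d₁ * y + d₁ * α₅ * t / α₂))
    (x y t : ℝ) :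
    pt φ x y t - 2 * (px φ x y t) ^ 2 - 2 * φ x y t * px (px φ) x y t -
      2 * (py φ x y t) ^ 2 - 2 * φ x y t * py (py φ) x y t = 0 :=
  stmt_17_general α₂ α₄ α₅ d₁ d₂ φ hφ x y t
end
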